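/- Let O be a discrete valuation ring with uniformizer ϖ and fraction field F, let n ≥ 1, and let X ∈ Mₙ(O) be a matrix with X − Y ∈ ϖ·Mₙ(O). Let t_X = {A ∈ Mₙ(F) : XA = AX} be the centralizer of X. Then for v ∈ Mₙ(F), one has Tr(X·(vw − wv)) ∈ O for every w ∈ ϖ·Mₙ(O) if and only if v ∈ ϖ⁻¹·Mₙ(O) + t_X. -/

import Mathlib

/-!
Since `Tr(X(vw - wv)) = Tr([X, v] w)` and `Mₙ(O)` is self-dual for the trace pairing, the
condition on `v` says exactly that `ϖ [X, v] ∈ Mₙ(O)`.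

Modulo `ϖ`, `X` becomes the regular nilpotent `Y`, whose centralizer over any commutative ring
consists of the polynomials in `Y` (a matrix commuting with `Y` is determined by its first row).
Lifting, an integral `W` with `[X, W] ≡ 0 mod ϖ` is congruent modulo `ϖ` to a polynomial in
`X`; iterating, `[X, W] ≡ 0 mod ϖ^K` gives `W ∈ ϖ^K Mₙ(O) + t_X`. If `ϖ^K v` is integral, this
applies to `W = ϖ^(K+1) v`, since `[X, W] = ϖ^K · ϖ[X, v]`, and dividing by `ϖ^(K+1)` yields
`v ∈ ϖ⁻¹ Mₙ(O) + t_X`.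
-/

open Matrix

/-- The regular nilpotent matrix `Y` with `(i, i+1)`-entries equal to `1` and all
other entries `0`. -/
def Ymat (n : ℕ) (R : Type*) [CommRing R] : Matrix (Fin n) (Fin n) R :=
  fun i j => if (j : ℕ) = (i : ℕ) + 1 then 1 else 0

theorem Commute.self_sum_smul_pow {R A ι : Type*} [CommSemiring R] [Semiring A] [Algebra R A]
    (a : A) (s : Finset ι) (c : ι → R) (e : ι → ℕ) : Commute a (∑ i ∈ s, c i • a ^ e i) :=
  Commute.sum_right _ _ _ fun i _ => (Commute.self_pow a (e i)).smul_right (c i)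

section Ymat
variable {n : ℕ} {R : Type*} [CommRing R]

theorem Ymat_pow_apply (m : ℕ) (i j : Fin n) :
    (Ymat n R ^ m) i j = if (j : ℕ) = i + m then 1 else 0 := by
  induction m generalizing j with
  | zero => simp [one_apply, Fin.ext_iff, eq_comm]
  | succ m ih =>
    simp only [pow_succ, mul_apply, ih, Ymat]
    rw [Fin.sum_univ_eq_sum_range
      (fun k => (if k = i + m then (1 : R) else 0) * if (j : ℕ) = k + 1 then 1 else 0)]
    simp only [ite_mul, one_mul, zero_mul, Finset.sum_ite_eq', Finset.mem_range]
    split_ifs <;> first | rfl | omega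

theorem Ymat_mul_apply_of_lt (A : Matrix (Fin n) (Fin n) R) {i : ℕ} (hi : i + 1 < n)
    (j : Fin n) : (Ymat n R * A) ⟨i, by omega⟩ j = A ⟨i + 1, hi⟩ j := by
  rw [mul_apply, Finset.sum_eq_single ⟨i + 1, hi⟩] <;> simp +contextual [Ymat, Fin.ext_iff]

theorem Ymat_map {S : Type*} [CommRing S] (f : R →+* S) : (Ymat n R).map f = Ymat n S := by
  ext i j; simp [Ymat, apply_ite f]

theorem eq_zero_of_commute_Ymat {B : Matrix (Fin n) (Fin n) R} (hB : Commute (Ymat n R) B)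
    (h0 : ∀ (hn : 0 < n) j, B ⟨0, hn⟩ j = 0) : B = 0 := by
  suffices ∀ (i : ℕ) (hi : i < n) j, B ⟨i, hi⟩ j = 0 from ext fun i j => this i i.isLt j
  intro i
  induction i with
  | zero => exact h0
  | succ i ih =>
    intro hi j
    rw [← Ymat_mul_apply_of_lt B hi, hB.eq, mul_apply]
    exact Finset.sum_eq_zero fun k _ => by rw [ih, zero_mul]

theorem exists_eq_sum_smul_Ymat_pow_of_commute {A : Matrix (Fin n) (Fin n) R}
    (hA : Commute (Ymat n R) A) :
    ∃ c : Fin n → R, A = ∑ m : Fin n, c m • Ymat n R ^ (m : ℕ) := by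
  refine ⟨fun m => A ⟨0, m.pos⟩ m, sub_eq_zero.1 (eq_zero_of_commute_Ymat ?_ fun hn j => ?_)⟩
  · exact hA.sub_right (Commute.self_sum_smul_pow _ _ _ _)
  · simp [Matrix.sum_apply, Ymat_pow_apply, ← Fin.ext_iff]

end Ymat

section Lift
variable {O : Type*} [CommRing O] {ϖ : O} {n : ℕ}

theorem exists_commute_eq_smul_add {X A C : Matrix (Fin n) (Fin n) O}
    (hX : X.map (Ideal.Quotient.mk (Ideal.span {ϖ})) = Ymat n _) (hA : X * A - A * X = ϖ • C) :
    ∃ W P, Commute X P ∧ A = ϖ • W + P := by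
  set π := Ideal.Quotient.mk (Ideal.span {ϖ})
  have hAπ : Commute (Ymat n _) (A.map π) := by
    have hAπ := congr_arg π.mapMatrix hA
    simp only [map_sub, map_mul, RingHom.mapMatrix_apply, hX, π, zero_smul,
      Matrix.map_smul' _ _ _ (map_mul π), Ideal.Quotient.mk_singleton_self] at hAπ
    exact sub_eq_zero.1 hAπ
  obtain ⟨c, hc⟩ := exists_eq_sum_smul_Ymat_pow_of_commute hAπ
  obtain ⟨d, rfl⟩ := Ideal.Quotient.mk_surjective.comp_left c
  set P := ∑ m : Fin n, d m • X ^ (m : ℕ)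
  have hP : π.mapMatrix (A - P) = 0 := by
    rw [map_sub, RingHom.mapMatrix_apply, hc, map_sum, sub_eq_zero]
    refine Finset.sum_congr rfl fun m _ => ?_
    rw [RingHom.mapMatrix_apply, Matrix.map_smul' _ _ _ (map_mul π), Matrix.map_pow, hX]
    rfl
  have hdvd : ∀ i j, ϖ ∣ (A - P) i j := fun i j =>
    (Ideal.Quotient.eq_zero_iff_dvd _ _).1 (congr_fun₂ hP i j)
  choose W hW using hdvd
  refine ⟨of W, P, Commute.self_sum_smul_pow _ _ _ _, ?_⟩
  ext i j
  simp [← hW]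

theorem exists_commute_eq_pow_smul_add [IsDomain O] (hϖ : ϖ ≠ 0) {X : Matrix (Fin n) (Fin n) O}
    (hX : X.map (Ideal.Quotient.mk (Ideal.span {ϖ})) = Ymat n _) (j : ℕ)
    {W C : Matrix (Fin n) (Fin n) O} (hW : X * W - W * X = ϖ ^ j • C) :
    ∃ W' t, Commute X t ∧ W = ϖ ^ j • W' + t := by
  induction j generalizing C with
  | zero => exact ⟨W, 0, Commute.zero_right X, by simp⟩
  | succ j ih =>
    obtain ⟨W₁, t₁, ht₁, rfl⟩ := ih (C := ϖ • C) (by rw [hW, pow_succ, mul_smul])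
    have hW₁ : X * W₁ - W₁ * X = ϖ • C := by
      refine smul_right_injective _ (pow_ne_zero j hϖ) ?_
      calc ϖ ^ j • (X * W₁ - W₁ * X)
          = X * (ϖ ^ j • W₁ + t₁) - (ϖ ^ j • W₁ + t₁) * X := by
            rw [mul_add, add_mul, ht₁.eq, Matrix.mul_smul, Matrix.smul_mul, smul_sub]
            abel
        _ = ϖ ^ j • ϖ • C := by rw [hW, pow_succ, mul_smul]
    obtain ⟨W₂, P, hP, rfl⟩ := exists_commute_eq_smul_add hX hW₁
    exact ⟨W₂, ϖ ^ j • P + t₁, (hP.smul_right _).add_right ht₁,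
      by rw [smul_add, smul_smul, ← pow_succ, add_assoc]⟩

end Lift

theorem Matrix.trace_mul_commutator {ι R : Type*} [Fintype ι] [CommRing R]
    (A B C : Matrix ι ι R) : (A * (B * C - C * B)).trace = ((A * B - B * A) * C).trace := by
  rw [mul_sub, sub_mul, trace_sub, trace_sub, Matrix.mul_assoc, ← Matrix.mul_assoc A C,
    trace_mul_cycle]

section Lattice
variable {O F : Type*} [CommRing O] [CommRing F] [Algebra O F]

theorem forall_trace_mul_mem_iff {ι : Type*} [Fintype ι] (ϖ : O) (M : Matrix ι ι F) :
    (∀ w : Matrix ι ι F, (∀ i j, ∃ c : O, w i j = algebraMap O F (ϖ * c)) →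
        ∃ c : O, (M * w).trace = algebraMap O F c) ↔
      ∃ C : Matrix ι ι O, C.map (algebraMap O F) = algebraMap O F ϖ • M := by
  classical
  constructor
  · intro h
    have hM : ∀ p q, ∃ c : O, algebraMap O F c = algebraMap O F ϖ * M p q := fun p q => by
      obtain ⟨c, hc⟩ := h (single q p (algebraMap O F (ϖ * 1))) fun i j =>
        ⟨if q = i ∧ p = j then 1 else 0, by rw [single_apply]; split_ifs <;> simp⟩
      exact ⟨c, by rw [← hc, trace_mul_single]; simp [mul_comm]⟩
    choose C hC using hM
    exact ⟨of C, ext fun p q => hC p q⟩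
  · rintro ⟨C, hC⟩ w hw
    choose c hc using hw
    refine ⟨(C * of c).trace, ?_⟩
    have hw : w = algebraMap O F ϖ • (of c).map (algebraMap O F) := ext fun i j => by
      simp [hc]
    rw [hw, Matrix.mul_smul, ← Matrix.smul_mul, ← hC, ← Matrix.map_mul, AddMonoidHom.map_trace]

theorem exists_map_eq_pow_smul [IsDomain O] [IsDiscreteValuationRing O] [IsFractionRing O F]
    {m p : Type*} [Finite m] [Finite p] {ϖ : O} (hϖ : Irreducible ϖ) (v : Matrix m p F) :
    ∃ (K : ℕ) (W : Matrix m p O), W.map (algebraMap O F) = algebraMap O F ϖ ^ K • v := by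
  obtain ⟨⟨b, hb⟩, hbv⟩ := IsLocalization.exist_integer_multiples_of_finite (nonZeroDivisors O)
    fun ij : m × p => v ij.1 ij.2
  obtain ⟨K, u, rfl⟩ := IsDiscreteValuationRing.eq_unit_mul_pow_irreducible
    (nonZeroDivisors.ne_zero hb) hϖ
  choose W hW using hbv
  refine ⟨K, of fun i j => ↑u⁻¹ * W (i, j), ext fun i j => ?_⟩
  rw [map_apply, of_apply, map_mul, hW]
  change _ * ((u * ϖ ^ K : O) • v i j) = _
  rw [Algebra.smul_def, ← mul_assoc, ← map_mul, Units.inv_mul_cancel_left, Matrix.smul_apply,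
    smul_eq_mul, map_pow]

end Lattice

section Centralizer
variable {O F : Type*} [CommRing O] [IsDomain O] [IsDiscreteValuationRing O] [Field F]
  [Algebra O F] [IsFractionRing O F] {ϖ : O} {n : ℕ}

theorem exists_eq_inv_smul_map_add_of_commutator (hϖ : Irreducible ϖ)
    {X : Matrix (Fin n) (Fin n) O}
    (hX : X.map (Ideal.Quotient.mk (Ideal.span {ϖ})) = Ymat n _) {v : Matrix (Fin n) (Fin n) F}
    {C : Matrix (Fin n) (Fin n) O}
    (hC : C.map (algebraMap O F) =
      algebraMap O F ϖ • (X.map (algebraMap O F) * v - v * X.map (algebraMap O F))) :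
    ∃ (U : Matrix (Fin n) (Fin n) O) (t : Matrix (Fin n) (Fin n) F),
      X.map (algebraMap O F) * t = t * X.map (algebraMap O F) ∧
        v = (algebraMap O F ϖ)⁻¹ • U.map (algebraMap O F) + t := by
  set φ := algebraMap O F
  have hϖ₀ : φ ϖ ≠ 0 := (map_ne_zero_iff _ (IsFractionRing.injective O F)).2 hϖ.ne_zero
  obtain ⟨K, W, hW⟩ := exists_map_eq_pow_smul hϖ v
  have hWv : (ϖ • W).map φ = φ ϖ ^ (K + 1) • v := by
    rw [Matrix.map_smul' _ _ _ (map_mul φ), hW, smul_smul, pow_succ']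
  have hXW : X * (ϖ • W) - (ϖ • W) * X = ϖ ^ K • C := by
    apply Matrix.map_injective (IsFractionRing.injective O F)
    calc (X * (ϖ • W) - ϖ • W * X).map φ
        = X.map φ * (ϖ • W).map φ - (ϖ • W).map φ * X.map φ := by
          simp only [← RingHom.mapMatrix_apply, map_sub, map_mul]
      _ = φ ϖ ^ K • C.map φ := by
          rw [hWv, hC, Matrix.mul_smul, Matrix.smul_mul, ← smul_sub, smul_smul, pow_succ]
      _ = (ϖ ^ K • C).map φ := by rw [Matrix.map_smul' _ _ _ (map_mul φ), map_pow]
  obtain ⟨U, t, ht, hWt⟩ := exists_commute_eq_pow_smul_add hϖ.ne_zero hX K hXW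
  refine ⟨U, (φ ϖ ^ (K + 1))⁻¹ • t.map φ, ?_, ?_⟩
  · rw [Matrix.mul_smul, Matrix.smul_mul, ← Matrix.map_mul, ← Matrix.map_mul, ht.eq]
  · rw [← inv_smul_smul₀ (pow_ne_zero (K + 1) hϖ₀) v, ← hWv, hWt, Matrix.map_add _ (map_add φ),
      Matrix.map_smul' _ _ _ (map_mul φ), smul_add, smul_smul, map_pow]
    congr 2
    field_simp
    ring

end Centralizer

theorem stmt13_general {O : Type*} [CommRing O] [IsDomain O] [IsDiscreteValuationRing O]
    {F : Type*} [Field F] [Algebra O F] [IsFractionRing O F]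
    (ϖ : O) (hϖ : Irreducible ϖ)
    (n : ℕ) (X : Matrix (Fin n) (Fin n) O)
    (hX : ∀ i j : Fin n, ϖ ∣ (X - Ymat n O) i j)
    (v : Matrix (Fin n) (Fin n) F) :
    (∀ w : Matrix (Fin n) (Fin n) F,
        (∀ i j : Fin n, ∃ c : O, w i j = algebraMap O F (ϖ * c)) →
        ∃ c : O,
          (X.map (algebraMap O F) * (v * w - w * v)).trace = algebraMap O F c) ↔
      ∃ u t : Matrix (Fin n) (Fin n) F,
        (∀ i j : Fin n, ∃ c : O, u i j = (algebraMap O F ϖ)⁻¹ * algebraMap O F c) ∧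
        X.map (algebraMap O F) * t = t * X.map (algebraMap O F) ∧
        v = u + t := by
  have hXY : X.map (Ideal.Quotient.mk (Ideal.span {ϖ})) = Ymat n _ := by
    rw [← Ymat_map (Ideal.Quotient.mk (Ideal.span {ϖ}))]
    exact ext fun i j => Ideal.Quotient.eq.2 (Ideal.mem_span_singleton.2 (hX i j))
  simp_rw [trace_mul_commutator]
  rw [forall_trace_mul_mem_iff]
  constructor
  · rintro ⟨C, hC⟩
    obtain ⟨U, t, ht, rfl⟩ := exists_eq_inv_smul_map_add_of_commutator hϖ hXY hC
    exact ⟨_, t, fun i j => ⟨U i j, rfl⟩, ht, rfl⟩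
  · rintro ⟨u, t, hu, ht, rfl⟩
    choose U hU using hu
    have hϖ₀ : algebraMap O F ϖ ≠ 0 :=
      (map_ne_zero_iff _ (IsFractionRing.injective O F)).2 hϖ.ne_zero
    have hu : u = (algebraMap O F ϖ)⁻¹ • (of U).map (algebraMap O F) := ext hU
    refine ⟨X * of U - of U * X, ?_⟩
    rw [mul_add, add_mul, ht, add_sub_add_right_eq_sub, hu, Matrix.mul_smul, Matrix.smul_mul,
      ← smul_sub, smul_inv_smul₀ hϖ₀, Matrix.map_sub _ (map_sub _), Matrix.map_mul,
      Matrix.map_mul]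

/-- Let `O` be a discrete valuation ring with uniformizer `ϖ` and
fraction field `F`, let `X ∈ Mₙ(O)` with `X - Y ∈ ϖ·Mₙ(O)`, and let
`t_X = {A ∈ Mₙ(F) : XA = AX}` be the centralizer of `X`. Then for `v ∈ Mₙ(F)`:
`Tr(X·(vw - wv)) ∈ O` for all `w ∈ ϖ·Mₙ(O)` if and only if
`v ∈ ϖ⁻¹·Mₙ(O) + t_X`. -/
theorem stmt13 {O : Type*} [CommRing O] [IsDomain O] [IsDiscreteValuationRing O]
    {F : Type*} [Field F] [Algebra O F] [IsFractionRing O F]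
    (ϖ : O) (hϖ : Irreducible ϖ)
    (n : ℕ) (hn : 1 ≤ n) (X : Matrix (Fin n) (Fin n) O)
    (hX : ∀ i j : Fin n, ϖ ∣ (X - Ymat n O) i j)
    (v : Matrix (Fin n) (Fin n) F) :
    (∀ w : Matrix (Fin n) (Fin n) F,
        (∀ i j : Fin n, ∃ c : O, w i j = algebraMap O F (ϖ * c)) →
        ∃ c : O,
          (X.map (algebraMap O F) * (v * w - w * v)).trace = algebraMap O F c) ↔
      ∃ u t : Matrix (Fin n) (Fin n) F,
        (∀ i j : Fin n, ∃ c : O, u i j = (algebraMap O F ϖ)⁻¹ * algebraMap O F c) ∧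
        X.map (algebraMap O F) * t = t * X.map (algebraMap O F) ∧
        v = u + t :=
  stmt13_general ϖ hϖ n X hX v
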